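/- Let P be a d-dimensional prismatoid with top facet T and bottom facet B. Then T and B are Minkowski equivalent. -/

import Mathlib

open Pointwise

noncomputable section

/-- A point of `ℝ^d` is a *lattice point* if all its coordinates are integers. -/
def IsLatticePoint {d : ℕ} (x : Fin d → ℝ) : Prop :=
  ∀ i, ∃ n : ℤ, x i = (n : ℝ)

/-- A *polytope* is the convex hull of finitely many points. -/
def IsPolytope {E : Type*} [AddCommGroup E] [Module ℝ E] (P : Set E) : Prop :=
  ∃ V : Finset E, P = convexHull ℝ (V : Set E)

/-- A *lattice polytope* in `ℝ^d` is the convex hull of finitely many lattice points. -/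
def IsLatticePolytope {d : ℕ} (P : Set (Fin d → ℝ)) : Prop :=
  ∃ V : Finset (Fin d → ℝ), (∀ v ∈ V, IsLatticePoint v) ∧
    P = convexHull ℝ (V : Set (Fin d → ℝ))

/-- The subset of `P` on which the linear functional `u` is maximized. -/
def maxFace {E : Type*} [AddCommGroup E] [Module ℝ E] (P : Set E) (u : E →ₗ[ℝ] ℝ) : Set E :=
  {x ∈ P | ∀ y ∈ P, u y ≤ u x}

/-- `F` is a face of `P` if it is the maximizing set of some linear functional on `P`. -/
def IsFaceOf {E : Type*} [AddCommGroup E] [Module ℝ E] (P F : Set E) : Prop :=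
  ∃ u : E →ₗ[ℝ] ℝ, F = maxFace P u

/-- The dimension of a subset: the rank of the direction of its affine span. -/
def dimSet {E : Type*} [AddCommGroup E] [Module ℝ E] (F : Set E) : ℕ :=
  Module.finrank ℝ (affineSpan ℝ F).direction

/-- Two sets are parallel if the directions (linear parts) of their affine spans coincide. -/
def AreParallel {E : Type*} [AddCommGroup E] [Module ℝ E] (F G : Set E) : Prop :=
  (affineSpan ℝ F).direction = (affineSpan ℝ G).direction

/-- A facet is a face of codimension one. -/
def IsFacetOf {E : Type*} [AddCommGroup E] [Module ℝ E] (P F : Set E) : Prop :=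
  IsFaceOf P F ∧ dimSet F + 1 = dimSet P

/-- A vertex of `P` is a point whose singleton is a face of `P`. -/
def IsVertexOf {E : Type*} [AddCommGroup E] [Module ℝ E] (P : Set E) (v : E) : Prop :=
  IsFaceOf P {v}

/-- An edge of `P` is a one-dimensional face of `P`. -/
def IsEdgeOf {E : Type*} [AddCommGroup E] [Module ℝ E] (P F : Set E) : Prop :=
  IsFaceOf P F ∧ dimSet F = 1

/-- A polytope in `ℝ^d` is simple if every vertex is contained in exactly `d` edges. -/
def IsSimplePolytope {d : ℕ} (P : Set (Fin d → ℝ)) : Prop :=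
  ∀ v : Fin d → ℝ, IsVertexOf P v →
    {F : Set (Fin d → ℝ) | IsEdgeOf P F ∧ v ∈ F}.ncard = d

/-- An integer vector is primitive if it is not a nontrivial integer multiple of
another integer vector (in particular it is nonzero). -/
def IsPrimitiveVector {d : ℕ} (u : Fin d → ℤ) : Prop :=
  ∀ (k : ℤ) (w : Fin d → ℤ), u = k • w → IsUnit k

/-- `u` is a primitive edge direction of `P` at the vertex `v`: a primitive lattice vector
pointing from `v` along an edge of `P` incident to `v`. -/
def IsPrimitiveEdgeDirectionAt {d : ℕ} (P : Set (Fin d → ℝ)) (v : Fin d → ℝ)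
    (u : Fin d → ℤ) : Prop :=
  IsPrimitiveVector u ∧
    ∃ F : Set (Fin d → ℝ), IsEdgeOf P F ∧ v ∈ F ∧
      ∃ ε : ℝ, 0 < ε ∧ (v + ε • fun i => (u i : ℝ)) ∈ F

/-- A lattice polytope is smooth if it is simple and, at each vertex, the primitive
edge directions form a `ℤ`-basis of `ℤ^d`. -/
def IsSmoothPolytope {d : ℕ} (P : Set (Fin d → ℝ)) : Prop :=
  IsLatticePolytope P ∧ IsSimplePolytope P ∧
    ∀ v : Fin d → ℝ, IsVertexOf P v →
      ∃ b : Module.Basis (Fin d) ℤ (Fin d → ℤ), ∀ i, IsPrimitiveEdgeDirectionAt P v (b i)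

/-- The unit cube `[0,1]^d`. -/
def unitCube (d : ℕ) : Set (Fin d → ℝ) := {x | ∀ i, x i ∈ Set.Icc (0 : ℝ) 1}

/-- A `d`-dimensional combinatorial cube: a `d`-dimensional lattice polytope whose face
poset is order-isomorphic to the face poset of the unit cube `[0,1]^d`. -/
def IsCombinatorialCube (d : ℕ) (C : Set (Fin d → ℝ)) : Prop :=
  IsLatticePolytope C ∧ dimSet C = d ∧
    Nonempty ({F : Set (Fin d → ℝ) // IsFaceOf (unitCube d) F} ≃o
              {F : Set (Fin d → ℝ) // IsFaceOf C F})

/-- The pair `(P, Q)` has the Integer Decomposition Property: every lattice point of the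
Minkowski sum `P + Q` is a sum of a lattice point of `P` and a lattice point of `Q`. -/
def IsIDPPair {d : ℕ} (P Q : Set (Fin d → ℝ)) : Prop :=
  ∀ x : Fin d → ℝ, IsLatticePoint x → x ∈ P + Q →
    ∃ p ∈ P, ∃ q ∈ Q, IsLatticePoint p ∧ IsLatticePoint q ∧ x = p + q

/-- `P` and `Q` are Minkowski equivalent (have the same normal fan): two linear functionals
are maximized on the same face of `P` if and only if they are maximized on the same face
of `Q`. -/
def MinkowskiEquivalent {E : Type*} [AddCommGroup E] [Module ℝ E] (P Q : Set E) : Prop :=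
  ∀ u v : E →ₗ[ℝ] ℝ, maxFace P u = maxFace P v ↔ maxFace Q u = maxFace Q v

/-- `P` is a `d`-dimensional prismatoid with top facet `T` and bottom facet `B`: a
`d`-dimensional lattice polytope whose face poset is order-isomorphic to the face poset of
a prism `Q × [0,1]` over a `(d-1)`-dimensional polytope `Q`, where `T` and `B` are the
faces corresponding to `Q × {1}` and `Q × {0}` respectively, and `T` and `B` are parallel. -/
def IsPrismatoid (d : ℕ) (P T B : Set (Fin d → ℝ)) : Prop :=
  IsLatticePolytope P ∧ dimSet P = d ∧
    ∃ Q : Set (Fin (d - 1) → ℝ), IsPolytope Q ∧ dimSet Q = d - 1 ∧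
      ∃ φ : {F : Set ((Fin (d - 1) → ℝ) × ℝ) // IsFaceOf (Q ×ˢ Set.Icc (0 : ℝ) 1) F} ≃o
            {F : Set (Fin d → ℝ) // IsFaceOf P F},
        (∃ hT : IsFaceOf (Q ×ˢ Set.Icc (0 : ℝ) 1) (Q ×ˢ ({1} : Set ℝ)),
            (φ ⟨Q ×ˢ ({1} : Set ℝ), hT⟩).1 = T) ∧
        (∃ hB : IsFaceOf (Q ×ˢ Set.Icc (0 : ℝ) 1) (Q ×ˢ ({0} : Set ℝ)),
            (φ ⟨Q ×ˢ ({0} : Set ℝ), hB⟩).1 = B) ∧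
        AreParallel T B

/-- The face `F_I^J` of the unit cube given by disjoint index sets `I` (coordinates pinned
to `0`) and `J` (coordinates pinned to `1`). -/
def cubeFace (d : ℕ) (I J : Set (Fin d)) : Set (Fin d → ℝ) :=
  {x ∈ unitCube d | (∀ k ∈ I, x k = 0) ∧ (∀ k ∈ J, x k = 1)}

/-- Under a fixed order isomorphism `φ` from the face poset of the unit cube to the face
poset of `C`, the set `F` is the face of `C` corresponding to the face `F_I^J` of the
unit cube. -/
def IsCubeFaceImage {d : ℕ} {C : Set (Fin d → ℝ)}
    (φ : {F : Set (Fin d → ℝ) // IsFaceOf (unitCube d) F} ≃o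
         {F : Set (Fin d → ℝ) // IsFaceOf C F})
    (I J : Set (Fin d)) (F : Set (Fin d → ℝ)) : Prop :=
  ∃ h : IsFaceOf (unitCube d) (cubeFace d I J), (φ ⟨cubeFace d I J, h⟩).1 = F

/-- The last coordinate index of `Fin d` (for `0 < d`). -/
def lastIdx (d : ℕ) (hd : 0 < d) : Fin d := ⟨d - 1, Nat.sub_lt hd Nat.one_pos⟩

/-- The linear functional `x ↦ ⟨y, x⟩ = ∑ i, y i * x i` on `ℝ^d`. -/
def dotL {d : ℕ} (y : Fin d → ℝ) : (Fin d → ℝ) →ₗ[ℝ] ℝ :=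
  ∑ i, y i • LinearMap.proj (R := ℝ) (φ := fun _ : Fin d => ℝ) i

/-!
Tilt a functional `u` by a multiple of a functional `c` that is constant on `T` and on `B`
with different values (it exists because `T` and `B` are disjoint parallel faces), so that
the tilted functional has the same maximum on `T` and on `B`. Its maximal face `G` of `P`
then cuts out the `u`-maximal faces of both: `G ∩ T = Tᵘ` and `G ∩ B = Bᵘ`. On the prism
side, the face corresponding to `G` meets both `Q × {1}` and `Q × {0}`, so its functional
is constant in the vertical direction and its bottom part is the mirror image of its top
part. Since the face poset isomorphism preserves nonempty intersections, `Bᵘ` is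
determined by `Tᵘ`, and vice versa.
-/

abbrev Face {E : Type*} [AddCommGroup E] [Module ℝ E] (P : Set E) : Type _ :=
  {F : Set E // IsFaceOf P F}

section Faces

variable {E : Type*} [AddCommGroup E] [Module ℝ E] {P : Set E}

theorem IsFaceOf.subset {F : Set E} (hF : IsFaceOf P F) : F ⊆ P := by
  obtain ⟨u, rfl⟩ := hF
  exact fun _ hx => hx.1

theorem mem_maxFace_of_le {u : E →ₗ[ℝ] ℝ} {x y : E} (hx : x ∈ maxFace P u) (hy : y ∈ P)
    (hxy : u x ≤ u y) : y ∈ maxFace P u :=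
  ⟨hy, fun z hz => (hx.2 z hz).trans hxy⟩

theorem eq_of_mem_maxFace {u : E →ₗ[ℝ] ℝ} {x y : E} (hx : x ∈ maxFace P u)
    (hy : y ∈ maxFace P u) : u x = u y :=
  le_antisymm (hy.2 x hx.1) (hx.2 y hy.1)

theorem lt_of_mem_maxFace_of_notMem {u : E →ₗ[ℝ] ℝ} {x y : E} (hx : x ∈ maxFace P u)
    (hy : y ∈ P) (hyu : y ∉ maxFace P u) : u y < u x :=
  (hx.2 y hy).lt_of_ne fun h => hyu (mem_maxFace_of_le hx hy h.ge)

theorem maxFace_inter_maxFace {u v : E →ₗ[ℝ] ℝ} {x : E} (hu : x ∈ maxFace P u)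
    (hv : x ∈ maxFace P v) : maxFace P u ∩ maxFace P v = maxFace P (u + v) := by
  ext z
  refine ⟨fun ⟨hzu, hzv⟩ => ⟨hzu.1, fun y hy => add_le_add (hzu.2 y hy) (hzv.2 y hy)⟩,
    fun hz => ?_⟩
  have hsum : u x + v x ≤ u z + v z := hz.2 x hu.1
  have hzu : u z ≤ u x := hu.2 z hz.1
  have hzv : v z ≤ v x := hv.2 z hz.1
  exact ⟨mem_maxFace_of_le hu hz.1 (by linarith), mem_maxFace_of_le hv hz.1 (by linarith)⟩

theorem IsFaceOf.inter {F G : Set E} (hF : IsFaceOf P F) (hG : IsFaceOf P G)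
    (hne : (F ∩ G).Nonempty) : IsFaceOf P (F ∩ G) := by
  obtain ⟨u, rfl⟩ := hF
  obtain ⟨v, rfl⟩ := hG
  obtain ⟨x, hxu, hxv⟩ := hne
  exact ⟨u + v, maxFace_inter_maxFace hxu hxv⟩

theorem maxFace_inter_eq_maxFace {S : Set E} (hSP : S ⊆ P) {u : E →ₗ[ℝ] ℝ}
    (hne : (maxFace P u ∩ S).Nonempty) : maxFace P u ∩ S = maxFace S u := by
  obtain ⟨x, hxP, hxS⟩ := hne
  ext z
  refine ⟨fun ⟨hzP, hzS⟩ => ⟨hzS, fun y hy => hzP.2 y (hSP hy)⟩,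
    fun hz => ⟨mem_maxFace_of_le hxP (hSP hz.1) (hz.2 x hxS), hz.1⟩⟩

theorem maxFace_add_of_forall_eq {S : Set E} {c : E →ₗ[ℝ] ℝ}
    (hc : ∀ x ∈ S, ∀ y ∈ S, c x = c y) (u : E →ₗ[ℝ] ℝ) : maxFace S (u + c) = maxFace S u := by
  ext z
  refine ⟨fun hz => ⟨hz.1, fun y hy => ?_⟩, fun hz => ⟨hz.1, fun y hy => ?_⟩⟩
  · have := hz.2 y hy
    simp only [LinearMap.add_apply, hc y hy z hz.1] at this
    linarith
  · simp only [LinearMap.add_apply, hc y hy z hz.1]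
    linarith [hz.2 y hy]

theorem AreParallel.forall_eq {S S' : Set E} (hSS' : AreParallel S S') {w : E →ₗ[ℝ] ℝ}
    (hw : ∀ x ∈ S, ∀ y ∈ S, w x = w y) : ∀ x ∈ S', ∀ y ∈ S', w x = w y := by
  have hker : vectorSpan ℝ S ≤ LinearMap.ker w :=
    Submodule.span_le.2 <| by
      rintro _ ⟨x, hx, y, hy, rfl⟩
      simp [hw x hx y hy]
  intro x hx y hy
  have hxy : x -ᵥ y ∈ vectorSpan ℝ S := by
    rw [← direction_affineSpan, hSS', direction_affineSpan]
    exact vsub_mem_vectorSpan ℝ hx hy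
  simpa [sub_eq_zero] using hker hxy

theorem exists_linearMap_separating_of_parallel {T B : Set E} (hT : IsFaceOf P T)
    (hB : IsFaceOf P B) (hTB : Disjoint T B) (hpar : AreParallel T B) :
    ∃ c : E →ₗ[ℝ] ℝ, (∀ x ∈ T, ∀ y ∈ T, c x = c y) ∧ (∀ x ∈ B, ∀ y ∈ B, c x = c y) ∧
      ∀ x ∈ T, ∀ y ∈ B, c x ≠ c y := by
  obtain ⟨wT, rfl⟩ := hT
  obtain ⟨wB, rfl⟩ := hB
  have hwT : ∀ x ∈ maxFace P wT, ∀ y ∈ maxFace P wT, wT x = wT y :=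
    fun _ hx _ hy => eq_of_mem_maxFace hx hy
  have hwB : ∀ x ∈ maxFace P wB, ∀ y ∈ maxFace P wB, wB x = wB y :=
    fun _ hx _ hy => eq_of_mem_maxFace hx hy
  refine ⟨wT - wB, fun x hx y hy => ?_, fun x hx y hy => ?_, fun x hx y hy => ?_⟩
  · simp [hwT x hx y hy, AreParallel.forall_eq hpar.symm hwB x hx y hy]
  · simp [hwB x hx y hy, hpar.forall_eq hwT x hx y hy]
  · have h₁ := lt_of_mem_maxFace_of_notMem hx hy.1 (hTB.notMem_of_mem_right hy)
    have h₂ := lt_of_mem_maxFace_of_notMem hy hx.1 (hTB.notMem_of_mem_left hx)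
    simp only [LinearMap.sub_apply]
    linarith

end Faces

section Tilt

variable {E : Type*} [AddCommGroup E] [Module ℝ E] {P T B : Set E} {c : E →ₗ[ℝ] ℝ}

theorem exists_face_inter_eq_maxFace (hTP : T ⊆ P) (hBP : B ⊆ P)
    (hcT : ∀ x ∈ T, ∀ y ∈ T, c x = c y) (hcB : ∀ x ∈ B, ∀ y ∈ B, c x = c y)
    (hcTB : ∀ x ∈ T, ∀ y ∈ B, c x ≠ c y)
    (hmeet : ∀ f : E →ₗ[ℝ] ℝ, (maxFace P f ∩ T).Nonempty ∨ (maxFace P f ∩ B).Nonempty)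
    {u : E →ₗ[ℝ] ℝ} {xT xB : E} (hxT : xT ∈ maxFace T u) (hxB : xB ∈ maxFace B u) :
    ∃ G, IsFaceOf P G ∧ G ∩ T = maxFace T u ∧ G ∩ B = maxFace B u := by
  set f := u + ((u xB - u xT) / (c xT - c xB)) • c
  have hfT : maxFace T f = maxFace T u :=
    maxFace_add_of_forall_eq (fun x hx y hy => by simp [hcT x hx y hy]) u
  have hfB : maxFace B f = maxFace B u :=
    maxFace_add_of_forall_eq (fun x hx y hy => by simp [hcB x hx y hy]) u
  have hbalance : f xT = f xB := by
    have hc : c xT - c xB ≠ 0 := sub_ne_zero.2 (hcTB xT hxT.1 xB hxB.1)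
    simp only [f, LinearMap.add_apply, LinearMap.smul_apply, smul_eq_mul]
    field_simp
    ring
  have hxT' : xT ∈ maxFace T f := hfT ▸ hxT
  have hxB' : xB ∈ maxFace B f := hfB ▸ hxB
  have hTB : (maxFace P f ∩ T).Nonempty → (maxFace P f ∩ B).Nonempty :=
    fun ⟨x, hxP, hx⟩ => ⟨xB, mem_maxFace_of_le hxP (hBP hxB.1) ((hxT'.2 x hx).trans hbalance.le),
      hxB.1⟩
  have hBT : (maxFace P f ∩ B).Nonempty → (maxFace P f ∩ T).Nonempty :=
    fun ⟨x, hxP, hx⟩ => ⟨xT, mem_maxFace_of_le hxP (hTP hxT.1) ((hxB'.2 x hx).trans hbalance.ge),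
      hxT.1⟩
  obtain ⟨hGT, hGB⟩ : (maxFace P f ∩ T).Nonempty ∧ (maxFace P f ∩ B).Nonempty :=
    (hmeet f).elim (fun h => ⟨h, hTB h⟩) (fun h => ⟨hBT h, h⟩)
  exact ⟨maxFace P f, ⟨f, rfl⟩, by rw [maxFace_inter_eq_maxFace hTP hGT, hfT],
    by rw [maxFace_inter_eq_maxFace hBP hGB, hfB]⟩

end Tilt

section Compact

variable {E : Type*} [NormedAddCommGroup E] [NormedSpace ℝ E] [FiniteDimensional ℝ E]
  {P : Set E}

theorem maxFace_nonempty (hP : IsCompact P) (hPne : P.Nonempty) (u : E →ₗ[ℝ] ℝ) :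
    (maxFace P u).Nonempty := by
  obtain ⟨x, hxP, hx⟩ := hP.exists_isMaxOn hPne u.continuous_of_finiteDimensional.continuousOn
  exact ⟨x, hxP, fun y hy => hx hy⟩

theorem IsFaceOf.nonempty {F : Set E} (hF : IsFaceOf P F) (hP : IsCompact P)
    (hPne : P.Nonempty) : F.Nonempty := by
  obtain ⟨u, rfl⟩ := hF
  exact maxFace_nonempty hP hPne u

theorem IsFaceOf.isCompact {F : Set E} (hF : IsFaceOf P F) (hP : IsCompact P) :
    IsCompact F := by
  obtain ⟨u, rfl⟩ := hF
  refine hP.inter_right (show IsClosed {x | ∀ y ∈ P, u y ≤ u x} from ?_)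
  simp only [Set.ofPred_forall]
  exact isClosed_biInter fun y _ => isClosed_le continuous_const u.continuous_of_finiteDimensional

theorem minkowskiEquivalent_of_parallel_faces {T B : Set E} (hP : IsCompact P)
    (hPne : P.Nonempty) (hT : IsFaceOf P T) (hB : IsFaceOf P B) (hTB : Disjoint T B)
    (hpar : AreParallel T B)
    (hmeet : ∀ G, IsFaceOf P G → (G ∩ T).Nonempty ∨ (G ∩ B).Nonempty)
    (htransfer : ∀ G G', IsFaceOf P G → IsFaceOf P G' → (G ∩ T).Nonempty → (G ∩ B).Nonempty →
      (G' ∩ T).Nonempty → (G' ∩ B).Nonempty → (G ∩ T = G' ∩ T ↔ G ∩ B = G' ∩ B)) :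
    MinkowskiEquivalent T B := by
  obtain ⟨c, hcT, hcB, hcTB⟩ := exists_linearMap_separating_of_parallel hT hB hTB hpar
  have hu : ∀ u, ∃ G, IsFaceOf P G ∧ (G ∩ T).Nonempty ∧ (G ∩ B).Nonempty ∧
      G ∩ T = maxFace T u ∧ G ∩ B = maxFace B u := fun u => by
    obtain ⟨xT, hxT⟩ := maxFace_nonempty (hT.isCompact hP) (hT.nonempty hP hPne) u
    obtain ⟨xB, hxB⟩ := maxFace_nonempty (hB.isCompact hP) (hB.nonempty hP hPne) u
    obtain ⟨G, hG, hGT, hGB⟩ := exists_face_inter_eq_maxFace hT.subset hB.subset hcT hcB hcTB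
      (fun f => hmeet _ ⟨f, rfl⟩) hxT hxB
    exact ⟨G, hG, hGT ▸ ⟨xT, hxT⟩, hGB ▸ ⟨xB, hxB⟩, hGT, hGB⟩
  intro u v
  obtain ⟨G, hG, hGT, hGB, hGTu, hGBu⟩ := hu u
  obtain ⟨G', hG', hG'T, hG'B, hG'Tv, hG'Bv⟩ := hu v
  rw [← hGTu, ← hGBu, ← hG'Tv, ← hG'Bv]
  exact htransfer G G' hG hG' hGT hGB hG'T hG'B

end Compact

namespace OrderIso

variable {E E' : Type*} [AddCommGroup E] [Module ℝ E] [NormedAddCommGroup E'] [NormedSpace ℝ E']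
  [FiniteDimensional ℝ E'] {P : Set E} {P' : Set E'} (φ : Face P ≃o Face P')

theorem face_inter_nonempty (hP' : IsCompact P') (hP'ne : P'.Nonempty) {F G : Face P}
    (h : (F.1 ∩ G.1).Nonempty) :
    ((φ F).1 ∩ (φ G).1).Nonempty :=
  (φ ⟨_, F.2.inter G.2 h⟩).2.nonempty hP' hP'ne |>.mono <|
    Set.subset_inter (φ.monotone Set.inter_subset_left) (φ.monotone Set.inter_subset_right)

theorem face_map_inter (hP' : IsCompact P') (hP'ne : P'.Nonempty) {F G : Face P}
    (h : (F.1 ∩ G.1).Nonempty) :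
    (φ ⟨_, F.2.inter G.2 h⟩).1 = (φ F).1 ∩ (φ G).1 := by
  refine (Set.subset_inter (φ.monotone Set.inter_subset_left)
    (φ.monotone Set.inter_subset_right)).antisymm ?_
  let H : Face P' := ⟨_, (φ F).2.inter (φ G).2 (φ.face_inter_nonempty hP' hP'ne h)⟩
  have hF : φ.symm H ≤ F := φ.symm_apply_le.2 Set.inter_subset_left
  have hG : φ.symm H ≤ G := φ.symm_apply_le.2 Set.inter_subset_right
  exact φ.symm_apply_le.1 (show φ.symm H ≤ ⟨_, F.2.inter G.2 h⟩ from Set.subset_inter hF hG)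

theorem face_inter_eq_inter_iff (hP' : IsCompact P') (hP'ne : P'.Nonempty) {F F' G : Face P}
    (hF : (F.1 ∩ G.1).Nonempty) (hF' : (F'.1 ∩ G.1).Nonempty) :
    (φ F).1 ∩ (φ G).1 = (φ F').1 ∩ (φ G).1 ↔ F.1 ∩ G.1 = F'.1 ∩ G.1 := by
  rw [← φ.face_map_inter hP' hP'ne hF, ← φ.face_map_inter hP' hP'ne hF', ← Subtype.ext_iff,
    EmbeddingLike.apply_eq_iff_eq, Subtype.mk.injEq]

end OrderIso

section Prism

variable {α : Type*} [AddCommGroup α] [Module ℝ α] {K : Set α} {σ σ' : Set (α × ℝ)}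

theorem LinearMap.apply_prod_eq (w : α × ℝ →ₗ[ℝ] ℝ) (q : α) (t : ℝ) :
    w (q, t) = w (q, 0) + t * w (0, 1) := by
  rw [← smul_eq_mul, ← map_smul, ← map_add, Prod.smul_mk, smul_zero, smul_eq_mul, mul_one,
    Prod.mk_add_mk, add_zero, zero_add]

theorem prism_face_meets_top_or_bottom (hσ : IsFaceOf (K ×ˢ Set.Icc (0 : ℝ) 1) σ)
    (hne : σ.Nonempty) :
    (σ ∩ K ×ˢ ({1} : Set ℝ)).Nonempty ∨ (σ ∩ K ×ˢ ({0} : Set ℝ)).Nonempty := by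
  obtain ⟨w, rfl⟩ := hσ
  obtain ⟨⟨q, t⟩, hqt⟩ := hne
  obtain ⟨hq, ht₀, ht₁⟩ := hqt.1
  have h₁ := w.apply_prod_eq q t
  have h₂ := w.apply_prod_eq q 1
  rcases le_total 0 (w (0, 1)) with hw | hw
  · refine .inl ⟨(q, 1), mem_maxFace_of_le hqt ⟨hq, by simp⟩ (by nlinarith), hq, rfl⟩
  · refine .inr ⟨(q, 0), mem_maxFace_of_le hqt ⟨hq, by simp⟩ (by nlinarith), hq, rfl⟩

theorem prism_face_mem_zero_iff_mem_one (hσ : IsFaceOf (K ×ˢ Set.Icc (0 : ℝ) 1) σ)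
    (h₁ : (σ ∩ K ×ˢ ({1} : Set ℝ)).Nonempty) (h₀ : (σ ∩ K ×ˢ ({0} : Set ℝ)).Nonempty)
    (q : α) : (q, 0) ∈ σ ↔ (q, 1) ∈ σ := by
  obtain ⟨w, rfl⟩ := hσ
  obtain ⟨⟨a, _⟩, ha, haK, rfl⟩ := h₁
  obtain ⟨⟨b, _⟩, hb, hbK, rfl⟩ := h₀
  have hvert : w (0, 1) = 0 := by
    have ha₀ := ha.2 (a, 0) ⟨haK, by simp⟩
    have hb₁ := hb.2 (b, 1) ⟨hbK, by simp⟩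
    have := w.apply_prod_eq a 1
    have := w.apply_prod_eq b 1
    linarith
  have hq : w (q, 0) = w (q, 1) := by simp [w.apply_prod_eq q 1, hvert]
  exact ⟨fun h => mem_maxFace_of_le h ⟨h.1.1, by simp⟩ hq.le,
    fun h => mem_maxFace_of_le h ⟨h.1.1, by simp⟩ hq.ge⟩

theorem prism_face_inter_top_eq_iff (hσ : IsFaceOf (K ×ˢ Set.Icc (0 : ℝ) 1) σ)
    (hσ' : IsFaceOf (K ×ˢ Set.Icc (0 : ℝ) 1) σ')
    (hσ₁ : (σ ∩ K ×ˢ ({1} : Set ℝ)).Nonempty) (hσ₀ : (σ ∩ K ×ˢ ({0} : Set ℝ)).Nonempty)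
    (hσ'₁ : (σ' ∩ K ×ˢ ({1} : Set ℝ)).Nonempty) (hσ'₀ : (σ' ∩ K ×ˢ ({0} : Set ℝ)).Nonempty) :
    σ ∩ K ×ˢ ({1} : Set ℝ) = σ' ∩ K ×ˢ ({1} : Set ℝ) ↔
      σ ∩ K ×ˢ ({0} : Set ℝ) = σ' ∩ K ×ˢ ({0} : Set ℝ) := by
  have h := prism_face_mem_zero_iff_mem_one hσ hσ₁ hσ₀
  have h' := prism_face_mem_zero_iff_mem_one hσ' hσ'₁ hσ'₀
  simp only [Set.ext_iff, Set.mem_inter_iff, Set.mem_prod, Set.mem_singleton_iff, Prod.forall]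
  constructor
  · intro H q t
    rcases eq_or_ne t 0 with rfl | ht
    · simpa [h, h'] using H q 1
    · simp [ht]
  · intro H q t
    rcases eq_or_ne t 1 with rfl | ht
    · simpa [h, h'] using H q 0
    · simp [ht]

end Prism

section PrismatoidFaces

variable {α E : Type*} [NormedAddCommGroup α] [NormedSpace ℝ α] [FiniteDimensional ℝ α]
  [AddCommGroup E] [Module ℝ E] {K : Set α} {P : Set E}
  (φ : Face (K ×ˢ Set.Icc (0 : ℝ) 1) ≃o Face P)
  {hT : IsFaceOf (K ×ˢ Set.Icc (0 : ℝ) 1) (K ×ˢ {1})}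
  {hB : IsFaceOf (K ×ˢ Set.Icc (0 : ℝ) 1) (K ×ˢ {0})}

theorem disjoint_of_orderIso_prism (hR : IsCompact (K ×ˢ Set.Icc (0 : ℝ) 1))
    (hRne : (K ×ˢ Set.Icc (0 : ℝ) 1).Nonempty) :
    Disjoint (φ ⟨_, hT⟩).1 (φ ⟨_, hB⟩).1 := by
  rw [Set.disjoint_iff_inter_eq_empty, ← Set.not_nonempty_iff_eq_empty]
  intro h
  have h' := φ.symm.face_inter_nonempty hR hRne h
  simp only [OrderIso.symm_apply_apply] at h'
  obtain ⟨_, ⟨-, h₁⟩, ⟨-, h₀⟩⟩ := h'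
  exact one_ne_zero (h₁.symm.trans h₀)

theorem inter_top_eq_iff_inter_bottom_eq_of_orderIso_prism
    (hR : IsCompact (K ×ˢ Set.Icc (0 : ℝ) 1)) (hRne : (K ×ˢ Set.Icc (0 : ℝ) 1).Nonempty)
    {G G' : Set E} (hG : IsFaceOf P G) (hG' : IsFaceOf P G')
    (hGT : (G ∩ (φ ⟨_, hT⟩).1).Nonempty) (hGB : (G ∩ (φ ⟨_, hB⟩).1).Nonempty)
    (hG'T : (G' ∩ (φ ⟨_, hT⟩).1).Nonempty) (hG'B : (G' ∩ (φ ⟨_, hB⟩).1).Nonempty) :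
    G ∩ (φ ⟨_, hT⟩).1 = G' ∩ (φ ⟨_, hT⟩).1 ↔ G ∩ (φ ⟨_, hB⟩).1 = G' ∩ (φ ⟨_, hB⟩).1 := by
  have hne (F W : Face P) (h : (F.1 ∩ W.1).Nonempty) :=
    φ.symm.face_inter_nonempty hR hRne h
  have hiffT := φ.symm.face_inter_eq_inter_iff hR hRne (F := ⟨G, hG⟩) (F' := ⟨G', hG'⟩) hGT hG'T
  have hiffB := φ.symm.face_inter_eq_inter_iff hR hRne (F := ⟨G, hG⟩) (F' := ⟨G', hG'⟩) hGB hG'B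
  simp only [OrderIso.symm_apply_apply] at hiffT hiffB
  rw [← hiffT, ← hiffB]
  exact prism_face_inter_top_eq_iff (φ.symm ⟨G, hG⟩).2 (φ.symm ⟨G', hG'⟩).2
    (by simpa using hne ⟨G, hG⟩ _ hGT) (by simpa using hne ⟨G, hG⟩ _ hGB)
    (by simpa using hne ⟨G', hG'⟩ _ hG'T) (by simpa using hne ⟨G', hG'⟩ _ hG'B)

end PrismatoidFaces

section PrismatoidCompact

variable {α E : Type*} [NormedAddCommGroup α] [NormedSpace ℝ α] [FiniteDimensional ℝ α]
  [NormedAddCommGroup E] [NormedSpace ℝ E] [FiniteDimensional ℝ E] {K : Set α} {P : Set E}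
  (φ : Face (K ×ˢ Set.Icc (0 : ℝ) 1) ≃o Face P)
  {hT : IsFaceOf (K ×ˢ Set.Icc (0 : ℝ) 1) (K ×ˢ {1})}
  {hB : IsFaceOf (K ×ˢ Set.Icc (0 : ℝ) 1) (K ×ˢ {0})}

theorem face_meets_of_orderIso_prism (hR : IsCompact (K ×ˢ Set.Icc (0 : ℝ) 1))
    (hRne : (K ×ˢ Set.Icc (0 : ℝ) 1).Nonempty) (hP : IsCompact P) (hPne : P.Nonempty)
    (G : Set E) (hG : IsFaceOf P G) :
    (G ∩ (φ ⟨_, hT⟩).1).Nonempty ∨ (G ∩ (φ ⟨_, hB⟩).1).Nonempty := by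
  set σ := φ.symm ⟨G, hG⟩
  refine (prism_face_meets_top_or_bottom σ.2 (σ.2.nonempty hR hRne)).imp (fun h => ?_) (fun h => ?_)
  · simpa [σ] using φ.face_inter_nonempty hP hPne (F := σ) (G := ⟨_, hT⟩) h
  · simpa [σ] using φ.face_inter_nonempty hP hPne (F := σ) (G := ⟨_, hB⟩) h

theorem minkowskiEquivalent_of_orderIso_prism (hK : IsCompact K) (hKne : K.Nonempty)
    (hP : IsCompact P) (hPne : P.Nonempty) (hpar : AreParallel (φ ⟨_, hT⟩).1 (φ ⟨_, hB⟩).1) :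
    MinkowskiEquivalent (φ ⟨_, hT⟩).1 (φ ⟨_, hB⟩).1 := by
  have hR : IsCompact (K ×ˢ Set.Icc (0 : ℝ) 1) := hK.prod isCompact_Icc
  have hRne : (K ×ˢ Set.Icc (0 : ℝ) 1).Nonempty := hKne.prod (Set.nonempty_Icc.2 zero_le_one)
  exact minkowskiEquivalent_of_parallel_faces hP hPne (φ _).2 (φ _).2
    (disjoint_of_orderIso_prism φ hR hRne) hpar (face_meets_of_orderIso_prism φ hR hRne hP hPne)
    fun _ _ hG hG' => inter_top_eq_iff_inter_bottom_eq_of_orderIso_prism φ hR hRne hG hG'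

end PrismatoidCompact

/-- The top and bottom facets of a `d`-dimensional prismatoid are Minkowski
equivalent. -/
theorem prismatoid_top_bottom_minkowski_equivalent
    (d : ℕ) (P T B : Set (Fin d → ℝ)) (hP : IsPrismatoid d P T B) :
    MinkowskiEquivalent T B := by
  obtain ⟨⟨V, -, hPV⟩, -, Q, ⟨VQ, hQV⟩, -, φ, ⟨hT, rfl⟩, ⟨hB, rfl⟩, hpar⟩ := hP
  by_cases hTB : (φ ⟨_, hT⟩).1 = (φ ⟨_, hB⟩).1
  · exact hTB ▸ fun _ _ => Iff.rfl
  have hQne : Q.Nonempty := by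
    refine Set.nonempty_iff_ne_empty.2 fun hQ => hTB ?_
    subst hQ
    simp only [Set.empty_prod]
  have hPne : P.Nonempty := by
    refine Set.nonempty_iff_ne_empty.2 fun hP => hTB ?_
    have hempty (F : Face P) : F.1 = ∅ := Set.subset_empty_iff.1 (hP ▸ F.2.subset)
    rw [hempty, hempty]
  have hQ : IsCompact Q := hQV ▸ VQ.finite_toSet.isCompact_convexHull ℝ
  have hP : IsCompact P := hPV ▸ V.finite_toSet.isCompact_convexHull ℝ
  exact minkowskiEquivalent_of_orderIso_prism φ hQ hQne hP hPne hpar
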